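/- arXiv:math/0608760 — 2 statements merged into one kernel-verified Lean document; each statement's English description precedes it below -/
import Mathlib

section
/- Let I be a groupoid and X a strict I-category. Let C be the 2-category with the objects of I as objects, hom-categories C(A,B) := X_{A,B}, composition given by the algebra composition ∘, and identities 1^h_A := η_A(*). Then the assignment P(j) := X_{1^v_A,j}(1^h_A) (which equals X_{j^{-1},1^v_C}(1^h_C)) for j ∈ I(A,C) defines a strict 2-functor P : I → C which is the identity on objects. Moreover, if X' is another strict I-category with associated 2-functor P' : I → C', if F,G : X → X' are strict morphisms, and if σ consists of natural transformations σ_{A,B} : F_{A,B} ⇒ G_{A,B} satisfying σ^g_{B,C} ∘ σ^f_{A,B} = σ^{g∘f}_{A,C} and σ^{1^h_A}_{A,A} = i_{1^h_A}, then the following are equivalent: (i) X'_{j,k}(σ^f_{A,B}) = σ^{X_{j,k}(f)}_{C,D} for all (j,k) : (A,B) → (C,D) in I² and all f ∈ X_{A,B}; (ii) σ^{P(j)}_{A,C} = i_{P'(j)} for all j : A → C in I. -/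
open CategoryTheory

universe v u

/-- A strict 2-algebra over the 2-theory of categories with underlying category `I`
(an `I`-category): a strict 2-functor `X : I² → Cat` together with strictly 2-natural
composition functors `∘ : X_{B,C} × X_{A,B} → X_{A,C}` and unit functors
`η_B : * → X_{B,B}`, strictly associative and unital. -/
structure ICat (I : Type u) [Category.{u} I] where
  Obj : I → I → Type v
  cat : ∀ A B : I, Category.{v} (Obj A B)
  map : ∀ {A B C D : I}, (A ⟶ C) → (B ⟶ D) → (Obj A B ⥤ Obj C D)
  map_id : ∀ A B : I, map (𝟙 A) (𝟙 B) = 𝟭 (Obj A B)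
  map_comp : ∀ {A B C D E F : I} (j : A ⟶ C) (j' : C ⟶ E) (k : B ⟶ D) (k' : D ⟶ F),
    map (j ≫ j') (k ≫ k') = map j k ⋙ map j' k'
  comp : ∀ (A B C : I), Obj B C × Obj A B ⥤ Obj A C
  one : ∀ A : I, Obj A A
  comp_natural : ∀ {A B C A' B' C' : I} (j : A ⟶ A') (k : B ⟶ B') (l : C ⟶ C'),
    (map k l).prod (map j k) ⋙ comp A' B' C' = comp A B C ⋙ map j l
  one_natural : ∀ {A A' : I} (j : A ⟶ A'), (map j j).obj (one A) = one A'
  assoc : ∀ A B C D : I,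
    (comp B C D).prod (𝟭 (Obj A B)) ⋙ comp A B D =
      prod.associator (Obj C D) (Obj B C) (Obj A B) ⋙
        (𝟭 (Obj C D)).prod (comp A B C) ⋙ comp A C D
  one_comp : ∀ A B : I,
    ((Functor.const (Obj A B)).obj (one B)).prod' (𝟭 (Obj A B)) ⋙ comp A B B =
      𝟭 (Obj A B)
  comp_one : ∀ B C : I,
    (𝟭 (Obj B C)).prod' ((Functor.const (Obj B C)).obj (one B)) ⋙ comp B B C =
      𝟭 (Obj B C)

attribute [instance] ICat.cat

/-- A strict morphism of `I`-categories: a strict 2-natural transformation preserving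
composition and identity strictly. -/
structure ICatHom {I : Type u} [Category.{u} I] (X Y : ICat.{v} I) where
  app : ∀ A B : I, X.Obj A B ⥤ Y.Obj A B
  natural : ∀ {A B C D : I} (j : A ⟶ C) (k : B ⟶ D),
    X.map j k ⋙ app C D = app A B ⋙ Y.map j k
  comp_pres : ∀ A B C : I,
    (app B C).prod (app A B) ⋙ Y.comp A B C = X.comp A B C ⋙ app A C
  one_pres : ∀ A : I, (app A A).obj (X.one A) = Y.one A

theorem aux_const_comp {C D E : Type*} [Category C] [Category D] [Category E] (x : D) (H : D ⥤ E) :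
    (Functor.const C).obj x ⋙ H = (Functor.const C).obj (H.obj x) :=
  CategoryTheory.Functor.ext (fun _ => rfl) (fun _ _ _ => by simp)

theorem ICat.mapL {I : Type u} [Category.{u} I] (X : ICat.{v} I) {A B B' : I} (k : B ⟶ B') :
    X.map (𝟙 A) k =
      ((Functor.const (X.Obj A B)).obj ((X.map (𝟙 B) k).obj (X.one B))).prod' (𝟭 (X.Obj A B)) ⋙
        X.comp A B B' := by
  have h : ((Functor.const (X.Obj A B)).obj (X.one B)).prod' (𝟭 (X.Obj A B)) ⋙
        ((X.map (𝟙 B) k).prod (X.map (𝟙 A) (𝟙 B)) ⋙ X.comp A B B')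
      = ((Functor.const (X.Obj A B)).obj (X.one B)).prod' (𝟭 (X.Obj A B)) ⋙
        (X.comp A B B ⋙ X.map (𝟙 A) k) := by
    rw [X.comp_natural]
  have h2 : ((Functor.const (X.Obj A B)).obj (X.one B)).prod' (𝟭 (X.Obj A B)) ⋙
        ((X.map (𝟙 B) k).prod (X.map (𝟙 A) (𝟙 B)) ⋙ X.comp A B B')
      = (((Functor.const (X.Obj A B)).obj (X.one B) ⋙ X.map (𝟙 B) k).prod'
          (𝟭 (X.Obj A B) ⋙ X.map (𝟙 A) (𝟙 B))) ⋙ X.comp A B B' := rfl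
  have h3 : ((Functor.const (X.Obj A B)).obj (X.one B)).prod' (𝟭 (X.Obj A B)) ⋙
        (X.comp A B B ⋙ X.map (𝟙 A) k)
      = (((Functor.const (X.Obj A B)).obj (X.one B)).prod' (𝟭 (X.Obj A B)) ⋙ X.comp A B B) ⋙
          X.map (𝟙 A) k := rfl
  rw [h2, h3, X.one_comp, aux_const_comp, X.map_id, Functor.id_comp, Functor.id_comp] at h
  exact h.symm

theorem ICat.mapR {I : Type u} [Category.{u} I] (X : ICat.{v} I) {A A' C : I} (j : A ⟶ A') :
    X.map j (𝟙 C) =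
      (𝟭 (X.Obj A C)).prod' ((Functor.const (X.Obj A C)).obj ((X.map j (𝟙 A)).obj (X.one A))) ⋙
        X.comp A' A C := by
  have h : (𝟭 (X.Obj A C)).prod' ((Functor.const (X.Obj A C)).obj (X.one A)) ⋙
        ((X.map (𝟙 A) (𝟙 C)).prod (X.map j (𝟙 A)) ⋙ X.comp A' A C)
      = (𝟭 (X.Obj A C)).prod' ((Functor.const (X.Obj A C)).obj (X.one A)) ⋙
        (X.comp A A C ⋙ X.map j (𝟙 C)) := by
    rw [X.comp_natural]
  have h2 : (𝟭 (X.Obj A C)).prod' ((Functor.const (X.Obj A C)).obj (X.one A)) ⋙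
        ((X.map (𝟙 A) (𝟙 C)).prod (X.map j (𝟙 A)) ⋙ X.comp A' A C)
      = ((𝟭 (X.Obj A C) ⋙ X.map (𝟙 A) (𝟙 C)).prod'
          ((Functor.const (X.Obj A C)).obj (X.one A) ⋙ X.map j (𝟙 A))) ⋙ X.comp A' A C := rfl
  have h3 : (𝟭 (X.Obj A C)).prod' ((Functor.const (X.Obj A C)).obj (X.one A)) ⋙
        (X.comp A A C ⋙ X.map j (𝟙 C))
      = ((𝟭 (X.Obj A C)).prod' ((Functor.const (X.Obj A C)).obj (X.one A)) ⋙ X.comp A A C) ⋙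
          X.map j (𝟙 C) := rfl
  rw [h2, h3, X.comp_one, aux_const_comp, X.map_id, Functor.id_comp, Functor.id_comp] at h
  exact h.symm

theorem ICat.mapL_obj {I : Type u} [Category.{u} I] (X : ICat.{v} I) {A B B' : I} (k : B ⟶ B')
    (f : X.Obj A B) :
    (X.map (𝟙 A) k).obj f = (X.comp A B B').obj ((X.map (𝟙 B) k).obj (X.one B), f) :=
  Functor.congr_obj (X.mapL k) f

theorem ICat.mapR_obj {I : Type u} [Category.{u} I] (X : ICat.{v} I) {A A' C : I} (j : A ⟶ A')
    (f : X.Obj A C) :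
    (X.map j (𝟙 C)).obj f = (X.comp A' A C).obj (f, (X.map j (𝟙 A)).obj (X.one A)) :=
  Functor.congr_obj (X.mapR j) f

theorem ICat.mapL_hom {I : Type u} [Category.{u} I] (X : ICat.{v} I) {A B B' : I} (k : B ⟶ B')
    {x y : X.Obj A B} (g : x ⟶ y) :
    HEq ((X.map (𝟙 A) k).map g)
      ((X.comp A B B').map ((𝟙 ((X.map (𝟙 B) k).obj (X.one B)), g) :
        ((X.map (𝟙 B) k).obj (X.one B), x) ⟶ ((X.map (𝟙 B) k).obj (X.one B), y))) := by
  rw [Functor.congr_hom (X.mapL k) g]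
  simp only [eqToHom_comp_heq_iff, comp_eqToHom_heq_iff]
  exact HEq.rfl

theorem ICat.mapR_hom {I : Type u} [Category.{u} I] (X : ICat.{v} I) {A A' C : I} (j : A ⟶ A')
    {x y : X.Obj A C} (g : x ⟶ y) :
    HEq ((X.map j (𝟙 C)).map g)
      ((X.comp A' A C).map ((g, 𝟙 ((X.map j (𝟙 A)).obj (X.one A))) :
        (x, (X.map j (𝟙 A)).obj (X.one A)) ⟶ (y, (X.map j (𝟙 A)).obj (X.one A)))) := by
  rw [Functor.congr_hom (X.mapR j) g]
  simp only [eqToHom_comp_heq_iff, comp_eqToHom_heq_iff]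
  exact HEq.rfl

theorem ICat.one_map {I : Type u} [Groupoid.{u} I] (X : ICat.{v} I) {A C : I} (j : A ⟶ C) :
    (X.map (𝟙 A) j).obj (X.one A) = (X.map (Groupoid.inv j) (𝟙 C)).obj (X.one C) := by
  have h := X.map_comp j (Groupoid.inv j) j (𝟙 C)
  rw [Groupoid.comp_inv, Category.comp_id] at h
  have h2 := Functor.congr_obj h (X.one A)
  simp only [Functor.comp_obj] at h2
  rw [h2, X.one_natural]
theorem aux_hmap_congr {C D : Type*} [Category C] [Category D] (H : C ⥤ D) {a a' b b' : C}
    {p : a ⟶ b} {p' : a' ⟶ b'} (ha : a = a') (hb : b = b') (hp : HEq p p') :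
    HEq (H.map p) (H.map p') := by subst ha; subst hb; rw [eq_of_heq hp]

theorem aux_hmap_pair_fst {C D E : Type*} [Category C] [Category D] [Category E] (H : C × D ⥤ E)
    {a a' b b' : C} {x y : D} {p : a ⟶ b} {p' : a' ⟶ b'} (g : x ⟶ y)
    (ha : a = a') (hb : b = b') (hp : HEq p p') :
    HEq (H.map ((p, g) : (a, x) ⟶ (b, y))) (H.map ((p', g) : (a', x) ⟶ (b', y))) := by
  subst ha; subst hb; rw [eq_of_heq hp]

theorem aux_hmap_pair_snd {C D E : Type*} [Category C] [Category D] [Category E] (H : C × D ⥤ E)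
    {a a' b b' : D} {x y : C} {p : a ⟶ b} {p' : a' ⟶ b'} (g : x ⟶ y)
    (ha : a = a') (hb : b = b') (hp : HEq p p') :
    HEq (H.map ((g, p) : (x, a) ⟶ (y, b))) (H.map ((g, p') : (x, a') ⟶ (y, b'))) := by
  subst ha; subst hb; rw [eq_of_heq hp]

theorem aux_heq_app {C D : Type*} [Category C] [Category D] {F G : C ⥤ D} (τ : F ⟶ G)
    {x x' : C} (h : x = x') : HEq (τ.app x) (τ.app x') := by subst h; rfl
/-- Let `I` be a groupoid and `X` a strict `I`-category, with `C` the
associated 2-category (hom-categories `C(A,B) := X_{A,B}`).  Then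
`P(j) := X_{1^v_A,j}(1^h_A)` equals `X_{j⁻¹,1^v_C}(1^h_C)` and defines a strict
2-functor `P : I → C` which is the identity on objects.  Moreover, for strict morphisms
`F, G : X → X'` and a family `σ` of natural transformations `σ_{A,B} : F_{A,B} ⇒ G_{A,B}`
compatible with composition and identities, condition (i) (`σ` is a modification:
`X'_{j,k}(σ^f) = σ^{X_{j,k}(f)}`) is equivalent to condition (ii)
(`σ^{P(j)} = i_{P'(j)}` for all `j`). -/
theorem strict_two_functor_of_ICat {I : Type u} [Groupoid.{u} I]
    (X X' : ICat.{v} I) (F G : ICatHom X X')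
    (σ : ∀ A B : I, (F.app A B ⟶ G.app A B))
    (σ_comp : ∀ {A B C : I} (f : X.Obj A B) (g : X.Obj B C),
      HEq ((X'.comp A B C).map (((σ B C).app g, (σ A B).app f) :
            ((F.app B C).obj g, (F.app A B).obj f) ⟶ ((G.app B C).obj g, (G.app A B).obj f)))
          ((σ A C).app ((X.comp A B C).obj (g, f))))
    (σ_one : ∀ A : I, HEq ((σ A A).app (X.one A)) (𝟙 (X'.one A)))
    (P : ∀ {A C : I}, (A ⟶ C) → X.Obj A C)
    (hP : ∀ {A C : I} (j : A ⟶ C), P j = (X.map (𝟙 A) j).obj (X.one A))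
    (P' : ∀ {A C : I}, (A ⟶ C) → X'.Obj A C)
    (hP' : ∀ {A C : I} (j : A ⟶ C), P' j = (X'.map (𝟙 A) j).obj (X'.one A)) :
    -- `P(j) = X_{1,j}(1_A) = X_{j⁻¹,1}(1_C)`
    (∀ {A C : I} (j : A ⟶ C),
      P j = (X.map (Groupoid.inv j) (𝟙 C)).obj (X.one C)) ∧
    -- `P` is a strict 2-functor `I → C`, identity on objects
    (∀ A : I, P (𝟙 A) = X.one A) ∧
    (∀ {A C E : I} (j : A ⟶ C) (k : C ⟶ E),
      P (j ≫ k) = (X.comp A C E).obj (P k, P j)) ∧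
    -- the equivalence (i) ⟺ (ii)
    ((∀ {A B C E : I} (j : A ⟶ C) (k : B ⟶ E) (f : X.Obj A B),
        HEq ((X'.map j k).map ((σ A B).app f)) ((σ C E).app ((X.map j k).obj f)))
      ↔ (∀ {A C : I} (j : A ⟶ C), HEq ((σ A C).app (P j)) (𝟙 (P' j)))) := by
  refine ⟨fun {A C} j => ?_, fun A => ?_, fun {A C E} j k => ?_, ?_, ?_⟩
  · rw [hP]; exact X.one_map j
  · rw [hP, X.map_id]; rfl
  · rw [hP j, hP k, hP (j ≫ k)]
    have h := X.map_comp (𝟙 A) (𝟙 A) j k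
    rw [Category.id_comp] at h
    have h2 := Functor.congr_obj h (X.one A)
    simp only [Functor.comp_obj] at h2
    rw [h2]
    exact X.mapL_obj k _
  · -- (i) → (ii)
    intro hi A C j
    rw [hP, hP']
    have h1 := hi (𝟙 A) j (X.one A)
    have h2 : HEq ((X'.map (𝟙 A) j).map ((σ A A).app (X.one A)))
        ((X'.map (𝟙 A) j).map (𝟙 (X'.one A))) :=
      aux_hmap_congr _ (F.one_pres A) (G.one_pres A) (σ_one A)
    exact h1.symm.trans (h2.trans (heq_of_eq ((X'.map (𝟙 A) j).map_id _)))
  · -- (ii) → (i)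
    intro hii A B C E j k f
    -- sub-lemma L
    have L : ∀ {A B E : I} (k : B ⟶ E) (f : X.Obj A B),
        HEq ((X'.map (𝟙 A) k).map ((σ A B).app f)) ((σ A E).app ((X.map (𝟙 A) k).obj f)) := by
      intro A B E k f
      have e1 := X'.mapL_hom (A := A) k ((σ A B).app f)
      have eF : (F.app B E).obj ((X.map (𝟙 B) k).obj (X.one B))
          = (X'.map (𝟙 B) k).obj (X'.one B) := by
        have h := Functor.congr_obj (F.natural (𝟙 B) k) (X.one B)
        simp only [Functor.comp_obj] at h
        rw [h, F.one_pres]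
      have eG : (G.app B E).obj ((X.map (𝟙 B) k).obj (X.one B))
          = (X'.map (𝟙 B) k).obj (X'.one B) := by
        have h := Functor.congr_obj (G.natural (𝟙 B) k) (X.one B)
        simp only [Functor.comp_obj] at h
        rw [h, G.one_pres]
      have hp : HEq ((σ B E).app ((X.map (𝟙 B) k).obj (X.one B)))
          (𝟙 ((X'.map (𝟙 B) k).obj (X'.one B))) := by
        have h := hii k
        rw [hP, hP'] at h
        exact h
      have e2 := aux_hmap_pair_fst (X'.comp A B E) ((σ A B).app f) eF eG hp
      have e3 := σ_comp f ((X.map (𝟙 B) k).obj (X.one B))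
      have e4 : (X.comp A B E).obj ((X.map (𝟙 B) k).obj (X.one B), f)
          = (X.map (𝟙 A) k).obj f := (X.mapL_obj k f).symm
      exact ((e1.trans e2.symm).trans e3).trans (aux_heq_app _ e4)
    -- sub-lemma R
    have R : ∀ {A B C : I} (j : A ⟶ C) (f : X.Obj A B),
        HEq ((X'.map j (𝟙 B)).map ((σ A B).app f)) ((σ C B).app ((X.map j (𝟙 B)).obj f)) := by
      intro A B C j f
      have e1 := X'.mapR_hom (C := B) j ((σ A B).app f)
      have eF : (F.app C A).obj ((X.map j (𝟙 A)).obj (X.one A))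
          = (X'.map j (𝟙 A)).obj (X'.one A) := by
        have h := Functor.congr_obj (F.natural j (𝟙 A)) (X.one A)
        simp only [Functor.comp_obj] at h
        rw [h, F.one_pres]
      have eG : (G.app C A).obj ((X.map j (𝟙 A)).obj (X.one A))
          = (X'.map j (𝟙 A)).obj (X'.one A) := by
        have h := Functor.congr_obj (G.natural j (𝟙 A)) (X.one A)
        simp only [Functor.comp_obj] at h
        rw [h, G.one_pres]
      have hQ : ∀ (Y : ICat.{v} I), (Y.map (𝟙 C) (Groupoid.inv j)).obj (Y.one C)
          = (Y.map j (𝟙 A)).obj (Y.one A) := by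
        intro Y
        have h := Y.one_map (Groupoid.inv j)
        rw [show Groupoid.inv (Groupoid.inv j) = j by simp [Groupoid.inv_eq_inv]] at h
        exact h
      have hp : HEq ((σ C A).app ((X.map j (𝟙 A)).obj (X.one A)))
          (𝟙 ((X'.map j (𝟙 A)).obj (X'.one A))) := by
        have h := hii (Groupoid.inv j)
        rw [hP, hP', hQ X, hQ X'] at h
        exact h
      have e2 := aux_hmap_pair_snd (X'.comp C A B) ((σ A B).app f) eF eG hp
      have e3 := σ_comp ((X.map j (𝟙 A)).obj (X.one A)) f
      have e4 : (X.comp C A B).obj (f, (X.map j (𝟙 A)).obj (X.one A))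
          = (X.map j (𝟙 B)).obj f := (X.mapR_obj j f).symm
      exact ((e1.trans e2.symm).trans e3).trans (aux_heq_app _ e4)
    -- combine
    have hdec : X.map j k = X.map (𝟙 A) k ⋙ X.map j (𝟙 E) := by
      have h := X.map_comp (𝟙 A) j k (𝟙 E)
      rwa [Category.id_comp, Category.comp_id] at h
    have hdec' : X'.map j k = X'.map (𝟙 A) k ⋙ X'.map j (𝟙 E) := by
      have h := X'.map_comp (𝟙 A) j k (𝟙 E)
      rwa [Category.id_comp, Category.comp_id] at h
    have ha : (X'.map (𝟙 A) k).obj ((F.app A B).obj f)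
        = (F.app A E).obj ((X.map (𝟙 A) k).obj f) := by
      have h := Functor.congr_obj (F.natural (𝟙 A) k) f
      simp only [Functor.comp_obj] at h
      exact h.symm
    have hb : (X'.map (𝟙 A) k).obj ((G.app A B).obj f)
        = (G.app A E).obj ((X.map (𝟙 A) k).obj f) := by
      have h := Functor.congr_obj (G.natural (𝟙 A) k) f
      simp only [Functor.comp_obj] at h
      exact h.symm
    have t3 : (X.map j (𝟙 E)).obj ((X.map (𝟙 A) k).obj f) = (X.map j k).obj f := by
      have h := Functor.congr_obj hdec f
      simp only [Functor.comp_obj] at h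
      exact h.symm
    have main : HEq ((X'.map (𝟙 A) k ⋙ X'.map j (𝟙 E)).map ((σ A B).app f))
        ((σ C E).app ((X.map j k).obj f)) := by
      simp only [Functor.comp_map]
      exact (aux_hmap_congr (X'.map j (𝟙 E)) ha hb (L k f)).trans
        ((R j _).trans (aux_heq_app _ t3))
    rw [Functor.congr_hom hdec' ((σ A B).app f)]
    simp only [eqToHom_comp_heq_iff, comp_eqToHom_heq_iff]
    exact main
end

section
/- If Λ is a folding on a double category D with holonomy j ↦ j̄, then setting Γ(j) := (Λ^{j̄,1}_{j,1})^{-1}(i^v_{j̄}) and Γ'(j) := (Λ^{1,j}_{1,j̄})^{-1}(i^v_{j̄}) defines a connection pair on D with the same holonomy. -/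
open CategoryTheory

universe w v u

/-- A (strict) double category whose vertical 1-category is the category `I`:
objects are those of `I`, vertical morphisms are the morphisms of `I`, and the
horizontal morphisms and squares carry the remaining structure. -/
structure DoubleCat (I : Type u) [Category.{w} I] where
  Hor : I → I → Type v
  hId : (A : I) → Hor A A
  hComp : {A B C : I} → Hor A B → Hor B C → Hor A C
  hId_comp : ∀ {A B : I} (f : Hor A B), hComp (hId A) f = f
  hComp_hId : ∀ {A B : I} (f : Hor A B), hComp f (hId B) = f
  hComp_assoc : ∀ {A B C D : I} (f : Hor A B) (g : Hor B C) (h : Hor C D),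
    hComp (hComp f g) h = hComp f (hComp g h)
  Sq : {A B C D : I} → Hor A B → Hor C D → (A ⟶ C) → (B ⟶ D) → Type v
  hSqComp : ∀ {A B C A' B' C' : I} {f₁ : Hor A B} {f₂ : Hor B C}
    {g₁ : Hor A' B'} {g₂ : Hor B' C'} {j : A ⟶ A'} {k : B ⟶ B'} {l : C ⟶ C'},
    Sq f₁ g₁ j k → Sq f₂ g₂ k l → Sq (hComp f₁ f₂) (hComp g₁ g₂) j l
  vSqComp : ∀ {A B A' B' A'' B'' : I} {f : Hor A B} {g : Hor A' B'} {h : Hor A'' B''}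
    {j₁ : A ⟶ A'} {k₁ : B ⟶ B'} {j₂ : A' ⟶ A''} {k₂ : B' ⟶ B''},
    Sq f g j₁ k₁ → Sq g h j₂ k₂ → Sq f h (j₁ ≫ j₂) (k₁ ≫ k₂)
  hSqId : ∀ {A C : I} (j : A ⟶ C), Sq (hId A) (hId C) j j
  vSqId : ∀ {A B : I} (f : Hor A B), Sq f f (𝟙 A) (𝟙 B)
  hSqId_vcomp : ∀ {A C E : I} (j₁ : A ⟶ C) (j₂ : C ⟶ E),
    vSqComp (hSqId j₁) (hSqId j₂) = hSqId (j₁ ≫ j₂)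
  vSqId_hcomp : ∀ {A B C : I} (f₁ : Hor A B) (f₂ : Hor B C),
    hSqComp (vSqId f₁) (vSqId f₂) = vSqId (hComp f₁ f₂)
  hSq_id_left : ∀ {A B A' B' : I} {f : Hor A B} {g : Hor A' B'} {j : A ⟶ A'} {k : B ⟶ B'}
    (α : Sq f g j k), HEq (hSqComp (hSqId j) α) α
  hSq_id_right : ∀ {A B A' B' : I} {f : Hor A B} {g : Hor A' B'} {j : A ⟶ A'} {k : B ⟶ B'}
    (α : Sq f g j k), HEq (hSqComp α (hSqId k)) α
  hSq_assoc : ∀ {A B C D A' B' C' D' : I}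
    {f₁ : Hor A B} {f₂ : Hor B C} {f₃ : Hor C D}
    {g₁ : Hor A' B'} {g₂ : Hor B' C'} {g₃ : Hor C' D'}
    {j : A ⟶ A'} {k : B ⟶ B'} {l : C ⟶ C'} {m : D ⟶ D'}
    (α : Sq f₁ g₁ j k) (β : Sq f₂ g₂ k l) (γ : Sq f₃ g₃ l m),
    HEq (hSqComp (hSqComp α β) γ) (hSqComp α (hSqComp β γ))
  vSq_id_left : ∀ {A B A' B' : I} {f : Hor A B} {g : Hor A' B'} {j : A ⟶ A'} {k : B ⟶ B'}
    (α : Sq f g j k), HEq (vSqComp (vSqId f) α) α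
  vSq_id_right : ∀ {A B A' B' : I} {f : Hor A B} {g : Hor A' B'} {j : A ⟶ A'} {k : B ⟶ B'}
    (α : Sq f g j k), HEq (vSqComp α (vSqId g)) α
  vSq_assoc : ∀ {A₀ B₀ A₁ B₁ A₂ B₂ A₃ B₃ : I}
    {f₀ : Hor A₀ B₀} {f₁ : Hor A₁ B₁} {f₂ : Hor A₂ B₂} {f₃ : Hor A₃ B₃}
    {j₁ : A₀ ⟶ A₁} {k₁ : B₀ ⟶ B₁} {j₂ : A₁ ⟶ A₂} {k₂ : B₁ ⟶ B₂} {j₃ : A₂ ⟶ A₃} {k₃ : B₂ ⟶ B₃}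
    (α : Sq f₀ f₁ j₁ k₁) (β : Sq f₁ f₂ j₂ k₂) (γ : Sq f₂ f₃ j₃ k₃),
    HEq (vSqComp (vSqComp α β) γ) (vSqComp α (vSqComp β γ))
  interchange : ∀ {A B C A' B' C' A'' B'' C'' : I}
    {f₁ : Hor A B} {f₂ : Hor B C} {g₁ : Hor A' B'} {g₂ : Hor B' C'}
    {h₁ : Hor A'' B''} {h₂ : Hor B'' C''}
    {j₁ : A ⟶ A'} {k₁ : B ⟶ B'} {l₁ : C ⟶ C'}
    {j₂ : A' ⟶ A''} {k₂ : B' ⟶ B''} {l₂ : C' ⟶ C''}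
    (α : Sq f₁ g₁ j₁ k₁) (β : Sq f₂ g₂ k₁ l₁) (γ : Sq g₁ h₁ j₂ k₂) (δ : Sq g₂ h₂ k₂ l₂),
    hSqComp (vSqComp α γ) (vSqComp β δ) = vSqComp (hSqComp α β) (hSqComp γ δ)
  hSqId_one : ∀ A : I, hSqId (𝟙 A) = vSqId (hId A)

namespace DoubleCat

variable {I : Type u} [Category.{w} I] (D : DoubleCat.{w, v} I)

/-- Transport a square along equalities of its four boundary components. -/
def castSq {A B C E : I} {f f' : D.Hor A B} {g g' : D.Hor C E} {j j' : A ⟶ C} {k k' : B ⟶ E}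
    (hf : f = f') (hg : g = g') (hj : j = j') (hk : k = k') :
    D.Sq f g j k → D.Sq f' g' j' k' := by
  subst hf; subst hg; subst hj; subst hk; exact id

/-- A holonomy on a double category: a 2-functor from the vertical 1-category to the
horizontal 2-category which is the identity on objects. -/
structure Holonomy where
  bar : {A C : I} → (A ⟶ C) → D.Hor A C
  bar_id : ∀ A : I, bar (𝟙 A) = D.hId A
  bar_comp : ∀ {A C E : I} (j : A ⟶ C) (k : C ⟶ E), bar (j ≫ k) = D.hComp (bar j) (bar k)

/-- A folding on a double category: a holonomy together with bijections from squares
with boundary (top `f`, bottom `g`, left `j`, right `k`) to squares with identity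
vertical sides, top `k̄ ∘ f` and bottom `g ∘ j̄`, satisfying the four folding axioms. -/
structure Folding extends D.Holonomy where
  fold : ∀ {A B C E : I} {f : D.Hor A B} {g : D.Hor C E} {j : A ⟶ C} {k : B ⟶ E},
    D.Sq f g j k → D.Sq (D.hComp f (bar k)) (D.hComp (bar j) g) (𝟙 A) (𝟙 E)
  fold_bijective : ∀ {A B C E : I} (f : D.Hor A B) (g : D.Hor C E) (j : A ⟶ C) (k : B ⟶ E),
    Function.Bijective (fold (f := f) (g := g) (j := j) (k := k))
  fold_globular : ∀ {A B : I} {f g : D.Hor A B} (α : D.Sq f g (𝟙 A) (𝟙 B)),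
    HEq (fold α) α
  fold_hcomp : ∀ {A B C A' B' C' : I} {f₁ : D.Hor A B} {f₂ : D.Hor B C}
    {g₁ : D.Hor A' B'} {g₂ : D.Hor B' C'} {j : A ⟶ A'} {k : B ⟶ B'} {l : C ⟶ C'}
    (α : D.Sq f₁ g₁ j k) (β : D.Sq f₂ g₂ k l),
    HEq (fold (D.hSqComp α β))
      (D.vSqComp (D.hSqComp (D.vSqId f₁) (fold β))
        (D.castSq (D.hComp_assoc f₁ (bar k) g₂) rfl rfl rfl
          (D.hSqComp (fold α) (D.vSqId g₂))))
  fold_vcomp : ∀ {A B A' B' A'' B'' : I} {f : D.Hor A B} {g : D.Hor A' B'} {h : D.Hor A'' B''}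
    {j₁ : A ⟶ A'} {k₁ : B ⟶ B'} {j₂ : A' ⟶ A''} {k₂ : B' ⟶ B''}
    (α : D.Sq f g j₁ k₁) (β : D.Sq g h j₂ k₂),
    HEq (fold (D.vSqComp α β))
      (D.vSqComp (D.hSqComp (fold α) (D.vSqId (bar k₂)))
        (D.castSq (D.hComp_assoc (bar j₁) g (bar k₂)).symm rfl rfl rfl
          (D.hSqComp (D.vSqId (bar j₁)) (fold β))))
  fold_hSqId : ∀ {A C : I} (j : A ⟶ C), HEq (fold (D.hSqId j)) (D.vSqId (bar j))

/-- A connection pair on a double category: a holonomy together with squares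
`conn j` (`Γ(j)`) and `conn' j` (`Γ'(j)`) satisfying identity preservation, the
transport laws, and the cancellation laws. -/
structure ConnectionPair extends D.Holonomy where
  conn : ∀ {A C : I} (j : A ⟶ C), D.Sq (bar j) (D.hId C) j (𝟙 C)
  conn' : ∀ {A C : I} (j : A ⟶ C), D.Sq (D.hId A) (bar j) (𝟙 A) j
  conn_id : ∀ A : I, HEq (conn (𝟙 A)) (D.vSqId (D.hId A))
  conn'_id : ∀ A : I, HEq (conn' (𝟙 A)) (D.vSqId (D.hId A))
  conn_comp : ∀ {A C E : I} (j₁ : A ⟶ C) (j₂ : C ⟶ E),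
    HEq (conn (j₁ ≫ j₂))
      (D.vSqComp (D.hSqComp (conn j₁) (D.vSqId (bar j₂)))
        (D.hSqComp (D.hSqId j₂) (conn j₂)))
  conn'_comp : ∀ {A C E : I} (j₁ : A ⟶ C) (j₂ : C ⟶ E),
    HEq (conn' (j₁ ≫ j₂))
      (D.vSqComp (D.hSqComp (conn' j₁) (D.hSqId j₁))
        (D.hSqComp (D.vSqId (bar j₁)) (conn' j₂)))
  conn'_conn_h : ∀ {A C : I} (j : A ⟶ C),
    HEq (D.hSqComp (conn' j) (conn j)) (D.vSqId (bar j))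
  conn'_conn_v : ∀ {A C : I} (j : A ⟶ C),
    HEq (D.vSqComp (conn' j) (conn j)) (D.hSqId j)

end DoubleCat


namespace DoubleCat

section Aux

variable {I : Type u} [Category.{w} I] (D : DoubleCat.{w, v} I)

theorem castSq_heq {A B C E : I} {f f' : D.Hor A B} {g g' : D.Hor C E} {j j' : A ⟶ C}
    {k k' : B ⟶ E} (hf : f = f') (hg : g = g') (hj : j = j') (hk : k = k') (α : D.Sq f g j k) :
    HEq (D.castSq hf hg hj hk α) α := by
  subst hf hg hj hk; rfl

theorem vSqId_congr {A B : I} {f g : D.Hor A B} (h : f = g) :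
    HEq (D.vSqId f) (D.vSqId g) := by subst h; rfl

theorem hSqComp_heq_vSqId {A B C : I} {f₁ g₁ : D.Hor A B} {f₂ g₂ : D.Hor B C}
    {j : A ⟶ A} {k : B ⟶ B} {l : C ⟶ C}
    {α : D.Sq f₁ g₁ j k} {β : D.Sq f₂ g₂ k l} {x : D.Hor A B} {y : D.Hor B C} {z : D.Hor A C}
    (hα : HEq α (D.vSqId x)) (hβ : HEq β (D.vSqId y))
    (h1 : f₁ = x) (h2 : g₁ = x) (h3 : f₂ = y) (h4 : g₂ = y)
    (hj : j = 𝟙 A) (hk : k = 𝟙 B) (hl : l = 𝟙 C) (hz : D.hComp x y = z) :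
    HEq (D.hSqComp α β) (D.vSqId z) := by
  subst h1 h2 h3 h4 hj hk hl hz
  rw [eq_of_heq hα, eq_of_heq hβ, D.vSqId_hcomp]

theorem vSqComp_heq_vSqId {A B : I} {f g h : D.Hor A B}
    {j₁ : A ⟶ A} {k₁ : B ⟶ B} {j₂ : A ⟶ A} {k₂ : B ⟶ B}
    {α : D.Sq f g j₁ k₁} {β : D.Sq g h j₂ k₂} {x : D.Hor A B}
    (hα : HEq α (D.vSqId x)) (hβ : HEq β (D.vSqId x))
    (h1 : f = x) (h2 : g = x) (h3 : h = x)
    (hj₁ : j₁ = 𝟙 A) (hk₁ : k₁ = 𝟙 B) (hj₂ : j₂ = 𝟙 A) (hk₂ : k₂ = 𝟙 B) :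
    HEq (D.vSqComp α β) (D.vSqId x) := by
  subst h1 h2 h3 hj₁ hk₁ hj₂ hk₂
  rw [eq_of_heq hα, eq_of_heq hβ]
  exact D.vSq_id_left _

theorem Folding.heq_of_fold_heq (Λ : D.Folding) {A B C E : I}
    {f f' : D.Hor A B} {g g' : D.Hor C E} {j j' : A ⟶ C} {k k' : B ⟶ E}
    (hf : f = f') (hg : g = g') (hj : j = j') (hk : k = k')
    {α : D.Sq f g j k} {β : D.Sq f' g' j' k'}
    (h : HEq (Λ.fold α) (Λ.fold β)) : HEq α β := by
  subst hf hg hj hk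
  exact heq_of_eq ((Λ.fold_bijective f g j k).1 (eq_of_heq h))

noncomputable def Folding.connOf (Λ : D.Folding) {A C : I} (j : A ⟶ C) :
    D.Sq (Λ.bar j) (D.hId C) j (𝟙 C) :=
  (Equiv.ofBijective _ (Λ.fold_bijective (Λ.bar j) (D.hId C) j (𝟙 C))).symm
    (D.castSq (by rw [Λ.bar_id, D.hComp_hId]) (by rw [D.hComp_hId]) rfl rfl
      (D.vSqId (Λ.bar j)))

noncomputable def Folding.conn'Of (Λ : D.Folding) {A C : I} (j : A ⟶ C) :
    D.Sq (D.hId A) (Λ.bar j) (𝟙 A) j :=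
  (Equiv.ofBijective _ (Λ.fold_bijective (D.hId A) (Λ.bar j) (𝟙 A) j)).symm
    (D.castSq (by rw [D.hId_comp]) (by rw [Λ.bar_id, D.hId_comp]) rfl rfl
      (D.vSqId (Λ.bar j)))

theorem Folding.fold_connOf (Λ : D.Folding) {A C : I} (j : A ⟶ C) :
    HEq (Λ.fold (Λ.connOf D j)) (D.vSqId (Λ.bar j)) := by
  have h := (Equiv.ofBijective _ (Λ.fold_bijective (Λ.bar j) (D.hId C) j (𝟙 C))).apply_symm_apply
    (D.castSq (by rw [Λ.bar_id, D.hComp_hId]) (by rw [D.hComp_hId]) rfl rfl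
      (D.vSqId (Λ.bar j)))
  exact (heq_of_eq h).trans (D.castSq_heq _ _ _ _ _)

theorem Folding.fold_conn'Of (Λ : D.Folding) {A C : I} (j : A ⟶ C) :
    HEq (Λ.fold (Λ.conn'Of D j)) (D.vSqId (Λ.bar j)) := by
  have h := (Equiv.ofBijective _ (Λ.fold_bijective (D.hId A) (Λ.bar j) (𝟙 A) j)).apply_symm_apply
    (D.castSq (by rw [D.hId_comp]) (by rw [Λ.bar_id, D.hId_comp]) rfl rfl
      (D.vSqId (Λ.bar j)))
  exact (heq_of_eq h).trans (D.castSq_heq _ _ _ _ _)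

end Aux

end DoubleCat

/-- If `Λ` is a folding on a double category `D`, then
`Γ(j) := (Λ^{j̄,1}_{j,1})⁻¹(i^v_{j̄})` and `Γ'(j) := (Λ^{1,j}_{1,j̄})⁻¹(i^v_{j̄})`
define a connection pair on `D` with the same holonomy. -/
theorem connectionPair_of_folding {I : Type u} [Category.{w} I] (D : DoubleCat.{w, v} I)
    (Λ : D.Folding) :
    ∃ CP : D.ConnectionPair,
      (∀ {A C : I} (j : A ⟶ C), CP.bar j = Λ.bar j) ∧
      (∀ {A C : I} (j : A ⟶ C), HEq (Λ.fold (CP.conn j)) (D.vSqId (Λ.bar j))) ∧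
      (∀ {A C : I} (j : A ⟶ C), HEq (Λ.fold (CP.conn' j)) (D.vSqId (Λ.bar j))) := by
  classical
  refine ⟨{ Λ.toHolonomy with
    conn := fun j => Λ.connOf D j
    conn' := fun j => Λ.conn'Of D j
    conn_id := ?_
    conn'_id := ?_
    conn_comp := ?_
    conn'_comp := ?_
    conn'_conn_h := ?_
    conn'_conn_v := ?_ }, fun _ => rfl, fun j => Λ.fold_connOf D j, fun j => Λ.fold_conn'Of D j⟩
  · intro A
    exact (Λ.fold_globular _).symm.trans ((Λ.fold_connOf D _).trans (D.vSqId_congr (Λ.bar_id A)))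
  · intro A
    exact (Λ.fold_globular _).symm.trans ((Λ.fold_conn'Of D _).trans (D.vSqId_congr (Λ.bar_id A)))
  · intro A C E j₁ j₂
    refine Λ.heq_of_fold_heq D (Λ.bar_comp j₁ j₂) (by simp [D.hId_comp]) rfl (by simp) ?_
    refine (Λ.fold_connOf D _).trans (HEq.trans ?_ (Λ.fold_vcomp _ _).symm)
    refine (D.vSqComp_heq_vSqId (x := Λ.bar (j₁ ≫ j₂))
      (D.hSqComp_heq_vSqId
        ((Λ.fold_hcomp (Λ.connOf D j₁) (D.vSqId (Λ.bar j₂))).trans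
          (D.vSqComp_heq_vSqId (x := D.hComp (Λ.bar j₁) (Λ.bar j₂))
            (D.hSqComp_heq_vSqId HEq.rfl (Λ.fold_globular _) ?_ ?_ ?_ ?_ ?_ ?_ ?_ ?_)
            ((D.castSq_heq _ _ _ _ _).trans
              (D.hSqComp_heq_vSqId (Λ.fold_connOf D j₁) HEq.rfl ?_ ?_ ?_ ?_ ?_ ?_ ?_ ?_))
            ?_ ?_ ?_ ?_ ?_ ?_ ?_))
        HEq.rfl ?_ ?_ ?_ ?_ ?_ ?_ ?_ ?_)
      ((D.castSq_heq _ _ _ _ _).trans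
        (D.hSqComp_heq_vSqId HEq.rfl
          ((Λ.fold_hcomp (D.hSqId j₂) (Λ.connOf D j₂)).trans
            (D.vSqComp_heq_vSqId (x := Λ.bar j₂)
              (D.hSqComp_heq_vSqId HEq.rfl (Λ.fold_connOf D j₂) ?_ ?_ ?_ ?_ ?_ ?_ ?_ ?_)
              ((D.castSq_heq _ _ _ _ _).trans
                (D.hSqComp_heq_vSqId (Λ.fold_hSqId j₂) HEq.rfl ?_ ?_ ?_ ?_ ?_ ?_ ?_ ?_))
              ?_ ?_ ?_ ?_ ?_ ?_ ?_))
          ?_ ?_ ?_ ?_ ?_ ?_ ?_ ?_))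
      ?_ ?_ ?_ ?_ ?_ ?_ ?_).symm <;>
      simp [Λ.bar_id, Λ.bar_comp, D.hComp_hId, D.hId_comp, D.hComp_assoc]
  · intro A C E j₁ j₂
    refine Λ.heq_of_fold_heq D (by simp [D.hId_comp]) (Λ.bar_comp j₁ j₂) (by simp) rfl ?_
    refine (Λ.fold_conn'Of D _).trans (HEq.trans ?_ (Λ.fold_vcomp _ _).symm)
    refine (D.vSqComp_heq_vSqId (x := Λ.bar (j₁ ≫ j₂))
      (D.hSqComp_heq_vSqId
        ((Λ.fold_hcomp (Λ.conn'Of D j₁) (D.hSqId j₁)).trans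
          (D.vSqComp_heq_vSqId (x := Λ.bar j₁)
            (D.hSqComp_heq_vSqId HEq.rfl (Λ.fold_hSqId j₁) ?_ ?_ ?_ ?_ ?_ ?_ ?_ ?_)
            ((D.castSq_heq _ _ _ _ _).trans
              (D.hSqComp_heq_vSqId (Λ.fold_conn'Of D j₁) HEq.rfl ?_ ?_ ?_ ?_ ?_ ?_ ?_ ?_))
            ?_ ?_ ?_ ?_ ?_ ?_ ?_))
        HEq.rfl ?_ ?_ ?_ ?_ ?_ ?_ ?_ ?_)
      ((D.castSq_heq _ _ _ _ _).trans
        (D.hSqComp_heq_vSqId HEq.rfl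
          ((Λ.fold_hcomp (D.vSqId (Λ.bar j₁)) (Λ.conn'Of D j₂)).trans
            (D.vSqComp_heq_vSqId (x := D.hComp (Λ.bar j₁) (Λ.bar j₂))
              (D.hSqComp_heq_vSqId HEq.rfl (Λ.fold_conn'Of D j₂) ?_ ?_ ?_ ?_ ?_ ?_ ?_ ?_)
              ((D.castSq_heq _ _ _ _ _).trans
                (D.hSqComp_heq_vSqId (Λ.fold_globular _) HEq.rfl ?_ ?_ ?_ ?_ ?_ ?_ ?_ ?_))
              ?_ ?_ ?_ ?_ ?_ ?_ ?_))
          ?_ ?_ ?_ ?_ ?_ ?_ ?_ ?_))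
      ?_ ?_ ?_ ?_ ?_ ?_ ?_).symm <;>
      simp [Λ.bar_id, Λ.bar_comp, D.hComp_hId, D.hId_comp, D.hComp_assoc]
  · intro A C j
    refine (Λ.fold_globular _).symm.trans ((Λ.fold_hcomp (Λ.conn'Of D j) (Λ.connOf D j)).trans ?_)
    refine D.vSqComp_heq_vSqId (x := Λ.bar j)
      (D.hSqComp_heq_vSqId HEq.rfl (Λ.fold_connOf D j) ?_ ?_ ?_ ?_ ?_ ?_ ?_ ?_)
      ((D.castSq_heq _ _ _ _ _).trans
        (D.hSqComp_heq_vSqId (Λ.fold_conn'Of D j) HEq.rfl ?_ ?_ ?_ ?_ ?_ ?_ ?_ ?_))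
      ?_ ?_ ?_ ?_ ?_ ?_ ?_ <;>
      simp [Λ.bar_id, Λ.bar_comp, D.hComp_hId, D.hId_comp, D.hComp_assoc]
  · intro A C j
    refine Λ.heq_of_fold_heq D rfl rfl (by simp) (by simp) ?_
    refine ((Λ.fold_vcomp (Λ.conn'Of D j) (Λ.connOf D j)).trans ?_).trans (Λ.fold_hSqId j).symm
    refine D.vSqComp_heq_vSqId (x := Λ.bar j)
      (D.hSqComp_heq_vSqId (Λ.fold_conn'Of D j) HEq.rfl ?_ ?_ ?_ ?_ ?_ ?_ ?_ ?_)
      ((D.castSq_heq _ _ _ _ _).trans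
        (D.hSqComp_heq_vSqId HEq.rfl (Λ.fold_connOf D j) ?_ ?_ ?_ ?_ ?_ ?_ ?_ ?_))
      ?_ ?_ ?_ ?_ ?_ ?_ ?_ <;>
      simp [Λ.bar_id, Λ.bar_comp, D.hComp_hId, D.hId_comp, D.hComp_assoc]
end
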